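/- The quotient ring ℤ[X]/I₀ is generated as a ℤ-module by the image of the subring of ℤ[X]/I₀ generated by x̄, ȳ, z̄₊, z̄₋ together with the elements x̄^i ȳ^l w̄_{m,η} for 0 ≤ i ≤ n−1, 0 ≤ l ≤ n−2, m ≥ 1 and η ∈ k̄. Equivalently, ℤ[X]/I₀ is spanned over ℤ by the images of all monomials in x, y, z₊, z₋ together with the elements x̄^i ȳ^l w̄_{m,η} with 0 ≤ i ≤ n−1, 0 ≤ l ≤ n−2, m ≥ 1, η ∈ k̄. -/

import Mathlib

open MvPolynomial

/- The set of variables `X = {x, y, z₊, z₋} ∪ {w_{m,η} | m ≥ 1, η ∈ k̄}`, where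
`k̄ = k ∪ {∞}` is encoded as `Option k` (with `none` playing the role of `∞`).
The variables `x, y, z₊, z₋` are `Sum.inl 0, Sum.inl 1, Sum.inl 2, Sum.inl 3`,
and `w_{m,η}` is `Sum.inr (m, η)`. -/
abbrev BigVar (k : Type*) := Fin 4 ⊕ (ℕ+ × Option k)

/-- The variable `w_{m,η}` of `ℤ[X]`. -/
noncomputable def W {k : Type*} (m : ℕ+) (η : Option k) : MvPolynomial (BigVar k) ℤ :=
  X (Sum.inr (m, η))

/-- `f₁(x,y) = ∑_{i=0}^{c(n-2)} (-1)^i binom(n-1-i, i) x^i y^{n-1-2i}`,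
where `c(t) = ⌊(t+1)/2⌋`, viewed in `ℤ[x, y, z₊, z₋] = MvPolynomial (Fin 4) ℤ`. -/
noncomputable def f1 (n : ℕ) : MvPolynomial (Fin 4) ℤ :=
  ∑ i ∈ Finset.range ((n - 1) / 2 + 1),
    C ((-1 : ℤ) ^ i * (Nat.choose (n - 1 - i) i : ℤ)) * X 0 ^ i * X 1 ^ (n - 1 - 2 * i)

/-- `f₂(x,y) = ∑_{i=0}^{c(n-1)} (-1)^i (n/(n-i)) binom(n-i, i) x^i y^{n-2i} - 2`
(each coefficient `n/(n-i) · binom(n-i, i)` is an integer). -/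
noncomputable def f2 (n : ℕ) : MvPolynomial (Fin 4) ℤ :=
  (∑ i ∈ Finset.range (n / 2 + 1),
    C ((-1 : ℤ) ^ i * ((n * Nat.choose (n - i) i / (n - i) : ℕ) : ℤ)) *
      X 0 ^ i * X 1 ^ (n - 2 * i)) - 2

/-- `f₃(x,y) = ∑_{i=1}^{c(n-2)} (-1)^{i-1} binom(n-i-2, i-1) x^{i+1} y^{n-1-2i}`. -/
noncomputable def f3 (n : ℕ) : MvPolynomial (Fin 4) ℤ :=
  ∑ i ∈ Finset.Icc 1 ((n - 1) / 2),
    C ((-1 : ℤ) ^ (i - 1) * (Nat.choose (n - i - 2) (i - 1) : ℤ)) *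
      X 0 ^ (i + 1) * X 1 ^ (n - 1 - 2 * i)

/-- `f₄(x,y) = ∑_{i=1}^{c(n-1)} (-1)^{i-1} binom(n-i-1, i-1) x^i y^{n-2i}`. -/
noncomputable def f4 (n : ℕ) : MvPolynomial (Fin 4) ℤ :=
  ∑ i ∈ Finset.Icc 1 (n / 2),
    C ((-1 : ℤ) ^ (i - 1) * (Nat.choose (n - i - 1) (i - 1) : ℤ)) *
      X 0 ^ i * X 1 ^ (n - 2 * i)

/-- The canonical inclusion `ℤ[x, y, z₊, z₋] → ℤ[X]` of polynomial rings. -/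
noncomputable def incl (k : Type*) :
    MvPolynomial (Fin 4) ℤ →+* MvPolynomial (BigVar k) ℤ :=
  (rename (Sum.inl : Fin 4 → BigVar k)).toRingHom

/-- `f₁, f₂, f₃, f₄` viewed inside `ℤ[X]`. -/
noncomputable def F1 (n : ℕ) (k : Type*) : MvPolynomial (BigVar k) ℤ := incl k (f1 n)
noncomputable def F2 (n : ℕ) (k : Type*) : MvPolynomial (BigVar k) ℤ := incl k (f2 n)
noncomputable def F3 (n : ℕ) (k : Type*) : MvPolynomial (BigVar k) ℤ := incl k (f3 n)
noncomputable def F4 (n : ℕ) (k : Type*) : MvPolynomial (BigVar k) ℤ := incl k (f4 n)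

/-- The ideal `I₀` of `ℤ[X]`, generated by `x^n - 1`; `f₁f₂`;
`z₊z₋ - 1 - f₁(2y + 4f₃)`; `f₁(z₊ - 1 - 2f₄)`; `f₁(z₊ - z₋)`;
`f₁(w_{m,η} - m - m f₄)`; `(z₊ - f₄)w_{m,η} - m x f₁²`; `(z₋ - f₄)w_{m,η} - m f₁(y + f₃)`;
`w_{m,η}w_{s,α} - m s x f₁²` for `η ≠ α`; and
`w_{m,η}(w_{t,η} - 1 - f₄) - (t-1) m x f₁²` for `m ≤ t`. -/
noncomputable def idealI0 (n : ℕ) (k : Type*) : Ideal (MvPolynomial (BigVar k) ℤ) :=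
  Ideal.span
    (({X (Sum.inl 0) ^ n - 1,
       F1 n k * F2 n k,
       X (Sum.inl 2) * X (Sum.inl 3) - 1 - F1 n k * (2 * X (Sum.inl 1) + 4 * F3 n k),
       F1 n k * (X (Sum.inl 2) - 1 - 2 * F4 n k),
       F1 n k * (X (Sum.inl 2) - X (Sum.inl 3))} :
      Set (MvPolynomial (BigVar k) ℤ)) ∪
     {p | ∃ (m : ℕ+) (η : Option k),
       p = F1 n k * (W m η - C ((m : ℕ) : ℤ) - C ((m : ℕ) : ℤ) * F4 n k)} ∪
     {p | ∃ (m : ℕ+) (η : Option k),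
       p = (X (Sum.inl 2) - F4 n k) * W m η - C ((m : ℕ) : ℤ) * X (Sum.inl 0) * F1 n k ^ 2} ∪
     {p | ∃ (m : ℕ+) (η : Option k),
       p = (X (Sum.inl 3) - F4 n k) * W m η -
         C ((m : ℕ) : ℤ) * F1 n k * (X (Sum.inl 1) + F3 n k)} ∪
     {p | ∃ (m s : ℕ+) (η α : Option k), η ≠ α ∧
       p = W m η * W s α - C ((m : ℕ) : ℤ) * C ((s : ℕ) : ℤ) * X (Sum.inl 0) * F1 n k ^ 2} ∪
     {p | ∃ (m t : ℕ+) (η : Option k), m ≤ t ∧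
       p = W m η * (W t η - 1 - F4 n k) -
         C (((t : ℕ) - 1 : ℕ) : ℤ) * C ((m : ℕ) : ℤ) * X (Sum.inl 0) * F1 n k ^ 2})

/-! The span `S` contains `1`, and `ℤ[X]/I₀` is generated as a ring by the images of the
variables, so it suffices that `S` is stable under multiplication by each of them. The relations
of `I₀` turn `z̄₊ w̄`, `z̄₋ w̄` and `w̄ w̄'` into `f₄`-multiples of `w̄`'s plus elements of the
subring generated by `x̄, ȳ, z̄₊, z̄₋`, so everything reduces to `x̄^i ȳ^l w̄ ∈ S` for all `i, l`.
There `x̄ⁿ = 1` bounds `i`, and since `f₁ = y^{n-1} + (terms of lower degree in y)`, the relation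
`f₁ w = m f₁ (1 + f₄)` lowers the degree in `y` as long as `l ≥ n - 1`. -/

namespace QuotientI0

variable {n : ℕ} {k : Type*}

local notation "Q" => MvPolynomial (BigVar k) ℤ ⧸ idealI0 n k
local notation "π" => Ideal.Quotient.mk (idealI0 n k)
local notation "x̄" => π (X (Sum.inl 0))
local notation "ȳ" => π (X (Sum.inl 1))
local notation "z̄₊" => π (X (Sum.inl 2))
local notation "z̄₋" => π (X (Sum.inl 3))

section Relations

open Set

lemma x_pow_eq_one : x̄ ^ n = 1 := by
  have h : X (Sum.inl 0) ^ n - 1 ∈ idealI0 n k := Ideal.subset_span (by simp)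
  rw [← Ideal.Quotient.eq_zero_iff_mem] at h
  simpa [sub_eq_zero] using h

lemma F1_mul_W (m : ℕ+) (η : Option k) :
    π (F1 n k) * π (W m η) = m * π (F1 n k) * (1 + π (F4 n k)) := by
  have h : F1 n k * (W m η - C ((m : ℕ) : ℤ) - C ((m : ℕ) : ℤ) * F4 n k) ∈ idealI0 n k :=
    Ideal.subset_span <| mem_union_left _ <| mem_union_left _ <| mem_union_left _ <|
      mem_union_left _ <| mem_union_right _ ⟨m, η, rfl⟩
  rw [← Ideal.Quotient.eq_zero_iff_mem] at h
  simp only [map_sub, map_mul, map_natCast] at h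
  linear_combination h

lemma zPlus_mul_W (m : ℕ+) (η : Option k) :
    z̄₊ * π (W m η) = π (F4 n k) * π (W m η) + m * x̄ * π (F1 n k) ^ 2 := by
  have h : (X (Sum.inl 2) - F4 n k) * W m η - C ((m : ℕ) : ℤ) * X (Sum.inl 0) * F1 n k ^ 2
      ∈ idealI0 n k :=
    Ideal.subset_span <| mem_union_left _ <| mem_union_left _ <| mem_union_left _ <|
      mem_union_right _ ⟨m, η, rfl⟩
  rw [← Ideal.Quotient.eq_zero_iff_mem] at h
  simp only [map_sub, map_mul, map_pow, map_natCast] at h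
  linear_combination h

lemma zMinus_mul_W (m : ℕ+) (η : Option k) :
    z̄₋ * π (W m η) = π (F4 n k) * π (W m η) + m * π (F1 n k) * (ȳ + π (F3 n k)) := by
  have h : (X (Sum.inl 3) - F4 n k) * W m η - C ((m : ℕ) : ℤ) * F1 n k * (X (Sum.inl 1) + F3 n k)
      ∈ idealI0 n k :=
    Ideal.subset_span <| mem_union_left _ <| mem_union_left _ <| mem_union_right _ ⟨m, η, rfl⟩
  rw [← Ideal.Quotient.eq_zero_iff_mem] at h
  simp only [map_sub, map_mul, map_add, map_natCast] at h
  linear_combination h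

lemma W_mul_W_of_ne (m s : ℕ+) {η α : Option k} (hηα : η ≠ α) :
    π (W m η) * π (W s α) = m * s * x̄ * π (F1 n k) ^ 2 := by
  have h : W m η * W s α - C ((m : ℕ) : ℤ) * C ((s : ℕ) : ℤ) * X (Sum.inl 0) * F1 n k ^ 2
      ∈ idealI0 n k :=
    Ideal.subset_span <| mem_union_left _ <| mem_union_right _ ⟨m, s, η, α, hηα, rfl⟩
  rw [← Ideal.Quotient.eq_zero_iff_mem] at h
  simp only [map_sub, map_mul, map_pow, map_natCast] at h
  linear_combination h

lemma W_mul_W_of_le {m t : ℕ+} (η : Option k) (hmt : m ≤ t) :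
    π (W m η) * π (W t η) =
      π (W m η) * (1 + π (F4 n k)) + (((t : ℕ) - 1 : ℕ) : Q) * m * x̄ * π (F1 n k) ^ 2 := by
  have h : W m η * (W t η - 1 - F4 n k) -
      C (((t : ℕ) - 1 : ℕ) : ℤ) * C ((m : ℕ) : ℤ) * X (Sum.inl 0) * F1 n k ^ 2 ∈ idealI0 n k :=
    Ideal.subset_span <| mem_union_right _ ⟨m, t, η, hmt, rfl⟩
  rw [← Ideal.Quotient.eq_zero_iff_mem] at h
  simp only [map_sub, map_mul, map_pow, map_one, map_natCast] at h
  linear_combination h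

end Relations

lemma mk_incl_monomial (a : ℤ) (i j : ℕ) :
    π (incl k (C a * X 0 ^ i * X 1 ^ j)) = a • (x̄ ^ i * ȳ ^ j) := by
  simp [incl, zsmul_eq_mul, mul_assoc]

lemma mk_F1 : π (F1 n k) = ∑ i ∈ Finset.range ((n - 1) / 2 + 1),
    ((-1 : ℤ) ^ i * (Nat.choose (n - 1 - i) i : ℤ)) • (x̄ ^ i * ȳ ^ (n - 1 - 2 * i)) := by
  simp only [F1, f1, map_sum, mk_incl_monomial]

lemma mk_F4 : π (F4 n k) = ∑ i ∈ Finset.Icc 1 (n / 2),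
    ((-1 : ℤ) ^ (i - 1) * (Nat.choose (n - i - 1) (i - 1) : ℤ)) • (x̄ ^ i * ȳ ^ (n - 2 * i)) := by
  simp only [F4, f4, map_sum, mk_incl_monomial]

variable (n k) in
noncomputable def genSubring : Subring (MvPolynomial (BigVar k) ℤ ⧸ idealI0 n k) :=
  Subring.closure {x̄, ȳ, z̄₊, z̄₋}

variable (n k) in
noncomputable def spanningSubmodule : Submodule ℤ (MvPolynomial (BigVar k) ℤ ⧸ idealI0 n k) :=
  Submodule.span ℤ ((genSubring n k : Set Q) ∪
    {p | ∃ (i l : ℕ) (m : ℕ+) (η : Option k), i ≤ n - 1 ∧ l ≤ n - 2 ∧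
      p = π (X (Sum.inl 0) ^ i * X (Sum.inl 1) ^ l * W m η)})

lemma mk_X_mem_genSubring (j : Fin 4) : π (X (Sum.inl j)) ∈ genSubring n k :=
  Subring.subset_closure <| by fin_cases j <;> simp

lemma mk_incl_mem_genSubring (g : MvPolynomial (Fin 4) ℤ) : π (incl k g) ∈ genSubring n k := by
  induction g using MvPolynomial.induction_on with
  | C a => simp [incl]
  | add p q hp hq => rw [map_add, map_add]; exact add_mem hp hq
  | mul_X p j hp => simpa [incl] using mul_mem hp (mk_X_mem_genSubring j)

lemma mk_F1_mem_genSubring : π (F1 n k) ∈ genSubring n k := mk_incl_mem_genSubring _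
lemma mk_F3_mem_genSubring : π (F3 n k) ∈ genSubring n k := mk_incl_mem_genSubring _
lemma mk_F4_mem_genSubring : π (F4 n k) ∈ genSubring n k := mk_incl_mem_genSubring _

lemma xy_mem_genSubring (i l : ℕ) : x̄ ^ i * ȳ ^ l ∈ genSubring n k :=
  mul_mem (pow_mem (mk_X_mem_genSubring 0) i) (pow_mem (mk_X_mem_genSubring 1) l)

lemma genSubring_subset_spanningSubmodule :
    (genSubring n k : Set Q) ⊆ spanningSubmodule n k :=
  fun _ h => Submodule.subset_span (.inl h)

lemma xyW_mem_of_le (hn : 0 < n) (i : ℕ) {l : ℕ} (hl : l ≤ n - 2) (m : ℕ+) (η : Option k) :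
    x̄ ^ i * ȳ ^ l * π (W m η) ∈ spanningSubmodule n k := by
  rw [← Nat.mod_add_div i n, pow_add, pow_mul, x_pow_eq_one, one_pow, mul_one]
  refine Submodule.subset_span (.inr ⟨i % n, l, m, η, ?_, hl, by simp⟩)
  have := Nat.mod_lt i hn
  omega

lemma xy_mul_F1_mul_W {l : ℕ} (hl : n - 1 ≤ l) (i : ℕ) (m : ℕ+) (η : Option k) :
    x̄ ^ i * ȳ ^ (l - (n - 1)) * π (F1 n k) * π (W m η) =
      ∑ j ∈ Finset.range ((n - 1) / 2 + 1), ((-1 : ℤ) ^ j * (Nat.choose (n - 1 - j) j : ℤ)) •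
        (x̄ ^ (i + j) * ȳ ^ (l - 2 * j) * π (W m η)) := by
  rw [mk_F1, Finset.mul_sum, Finset.sum_mul]
  refine Finset.sum_congr rfl fun j hj => ?_
  rw [Finset.mem_range] at hj
  rw [show l - 2 * j = l - (n - 1) + (n - 1 - 2 * j) by omega, pow_add, pow_add]
  simp only [zsmul_eq_mul]
  ring

lemma xyW_mem (hn : 0 < n) (i l : ℕ) (m : ℕ+) (η : Option k) :
    x̄ ^ i * ȳ ^ l * π (W m η) ∈ spanningSubmodule n k := by
  induction l using Nat.strong_induction_on generalizing i with
  | _ l ih =>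
  rcases le_or_gt l (n - 2) with hl | hl
  · exact xyW_mem_of_le hn i hl m η
  have hdescent := xy_mul_F1_mul_W (show n - 1 ≤ l by omega) i m η
  rw [Finset.sum_range_succ', mul_assoc _ (π (F1 n k)), F1_mul_W] at hdescent
  simp only [pow_zero, mul_zero, add_zero, Nat.sub_zero, Nat.choose_zero_right, Nat.cast_one,
    mul_one, one_smul] at hdescent
  rw [eq_sub_of_add_eq' hdescent.symm]
  refine sub_mem (genSubring_subset_spanningSubmodule ?_) (Submodule.sum_mem _ fun j hj => ?_)
  · exact mul_mem (xy_mem_genSubring i _) <| mul_mem (mul_mem (natCast_mem _ _)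
      mk_F1_mem_genSubring) (add_mem (one_mem _) mk_F4_mem_genSubring)
  · rw [Finset.mem_range] at hj
    exact Submodule.smul_mem _ _ (ih _ (by omega) _)

lemma mul_W_mem_of_mem_adjoin (hn : 0 < n) {r : Q} (hr : r ∈ Algebra.adjoin ℤ {x̄, ȳ})
    (m : ℕ+) (η : Option k) : r * π (W m η) ∈ spanningSubmodule n k := by
  rw [← Subalgebra.mem_toSubmodule, Algebra.adjoin_eq_span] at hr
  induction hr using Submodule.span_induction with
  | mem r hr =>
    obtain ⟨i, l, rfl⟩ := (Submonoid.mem_closure_pair _ _ r).1 hr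
    exact xyW_mem hn i l m η
  | zero => simp
  | add r s _ _ hr hs => rw [add_mul]; exact add_mem hr hs
  | smul a r _ hr => rw [smul_mul_assoc]; exact Submodule.smul_mem _ a hr

lemma xy_mem_adjoin (i l : ℕ) : x̄ ^ i * ȳ ^ l ∈ Algebra.adjoin ℤ {x̄, ȳ} :=
  mul_mem (pow_mem (Algebra.subset_adjoin (by simp)) i)
    (pow_mem (Algebra.subset_adjoin (by simp)) l)

lemma mk_F4_mem_adjoin : π (F4 n k) ∈ Algebra.adjoin ℤ {x̄, ȳ} := by
  rw [mk_F4]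
  exact Subalgebra.sum_mem _ fun j _ => Subalgebra.smul_mem _ (xy_mem_adjoin j _) _

lemma generator_mul_xyW_mem (hn : 0 < n) {u : Q} (hu : u ∈ ({x̄, ȳ, z̄₊, z̄₋} : Set Q))
    (i l : ℕ) (m : ℕ+) (η : Option k) :
    u * (x̄ ^ i * ȳ ^ l * π (W m η)) ∈ spanningSubmodule n k := by
  rcases hu with rfl | rfl | rfl | rfl
  · rw [show x̄ * (x̄ ^ i * ȳ ^ l * π (W m η)) = x̄ ^ (i + 1) * ȳ ^ l * π (W m η) by ring]
    exact xyW_mem hn _ _ m η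
  · rw [show ȳ * (x̄ ^ i * ȳ ^ l * π (W m η)) = x̄ ^ i * ȳ ^ (l + 1) * π (W m η) by ring]
    exact xyW_mem hn _ _ m η
  · rw [show z̄₊ * (x̄ ^ i * ȳ ^ l * π (W m η)) =
        x̄ ^ i * ȳ ^ l * π (F4 n k) * π (W m η) + x̄ ^ i * ȳ ^ l * (m * x̄ * π (F1 n k) ^ 2) by
      linear_combination x̄ ^ i * ȳ ^ l * zPlus_mul_W m η]
    refine add_mem (mul_W_mem_of_mem_adjoin hn (mul_mem (xy_mem_adjoin i l) mk_F4_mem_adjoin) m η)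
      (genSubring_subset_spanningSubmodule (mul_mem (xy_mem_genSubring i l) ?_))
    exact mul_mem (mul_mem (natCast_mem _ _) (mk_X_mem_genSubring 0))
      (pow_mem mk_F1_mem_genSubring 2)
  · rw [show z̄₋ * (x̄ ^ i * ȳ ^ l * π (W m η)) = x̄ ^ i * ȳ ^ l * π (F4 n k) * π (W m η) +
        x̄ ^ i * ȳ ^ l * (m * π (F1 n k) * (ȳ + π (F3 n k))) by
      linear_combination x̄ ^ i * ȳ ^ l * zMinus_mul_W m η]
    refine add_mem (mul_W_mem_of_mem_adjoin hn (mul_mem (xy_mem_adjoin i l) mk_F4_mem_adjoin) m η)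
      (genSubring_subset_spanningSubmodule (mul_mem (xy_mem_genSubring i l) ?_))
    exact mul_mem (mul_mem (natCast_mem _ _) mk_F1_mem_genSubring)
      (add_mem (mk_X_mem_genSubring 1) mk_F3_mem_genSubring)

lemma genSubring_mul_mem (hn : 0 < n) {u v : Q} (hu : u ∈ genSubring n k)
    (hv : v ∈ spanningSubmodule n k) : u * v ∈ spanningSubmodule n k := by
  induction hu using Subring.closure_induction generalizing v with
  | mem u hu =>
    induction hv using Submodule.span_induction with
    | mem v hv =>
      rcases hv with hv | ⟨i, l, m, η, -, -, rfl⟩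
      · exact genSubring_subset_spanningSubmodule (mul_mem (Subring.subset_closure hu) hv)
      · simpa only [map_mul, map_pow] using generator_mul_xyW_mem hn hu i l m η
    | zero => simp
    | add v w _ _ hv hw => rw [mul_add]; exact add_mem hv hw
    | smul a v _ hv => rw [mul_smul_comm]; exact Submodule.smul_mem _ a hv
  | zero => simp
  | one => simpa
  | add u u' _ _ hu hu' => rw [add_mul]; exact add_mem (hu hv) (hu' hv)
  | neg u _ hu => exact neg_mul u v ▸ neg_mem (hu hv)
  | mul u u' _ _ hu hu' => rw [mul_assoc]; exact hu (hu' hv)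

lemma xyW_mul_W_mem (hn : 0 < n) (i l : ℕ) (m' m : ℕ+) (η' η : Option k) :
    x̄ ^ i * ȳ ^ l * π (W m' η') * π (W m η) ∈ spanningSubmodule n k := by
  have hxF1 (s t : ℕ) : ((s : Q) * t * x̄ * π (F1 n k) ^ 2) ∈ genSubring n k :=
    mul_mem (mul_mem (mul_mem (natCast_mem _ s) (natCast_mem _ t)) (mk_X_mem_genSubring 0))
      (pow_mem mk_F1_mem_genSubring 2)
  by_cases hη : η' = η
  · subst hη
    wlog hm : m' ≤ m generalizing m m'
    · simpa only [mul_right_comm _ (π (W m' η'))] using this m m' (le_of_not_ge hm)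
    rw [show x̄ ^ i * ȳ ^ l * π (W m' η') * π (W m η') =
        x̄ ^ i * ȳ ^ l * (1 + π (F4 n k)) * π (W m' η') +
          x̄ ^ i * ȳ ^ l * ((((m : ℕ) - 1 : ℕ) : Q) * m' * x̄ * π (F1 n k) ^ 2) by
      linear_combination x̄ ^ i * ȳ ^ l * W_mul_W_of_le η' hm]
    exact add_mem (mul_W_mem_of_mem_adjoin hn
        (mul_mem (xy_mem_adjoin i l) (add_mem (one_mem _) mk_F4_mem_adjoin)) m' η')
      (genSubring_subset_spanningSubmodule (mul_mem (xy_mem_genSubring i l) (hxF1 _ _)))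
  · rw [mul_assoc, W_mul_W_of_ne m' m hη]
    exact genSubring_subset_spanningSubmodule (mul_mem (xy_mem_genSubring i l) (hxF1 _ _))

lemma mul_W_mem (hn : 0 < n) {v : Q} (hv : v ∈ spanningSubmodule n k) (m : ℕ+) (η : Option k) :
    v * π (W m η) ∈ spanningSubmodule n k := by
  induction hv using Submodule.span_induction with
  | mem v hv =>
    rcases hv with hv | ⟨i, l, m', η', -, -, rfl⟩
    · exact genSubring_mul_mem hn hv (by simpa using xyW_mem hn 0 0 m η)
    · simpa only [map_mul, map_pow] using xyW_mul_W_mem hn i l m' m η' η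
  | zero => simp
  | add v w _ _ hv hw => rw [add_mul]; exact add_mem hv hw
  | smul a v _ hv => rw [smul_mul_assoc]; exact Submodule.smul_mem _ a hv

theorem spanningSubmodule_eq_top (hn : 0 < n) : spanningSubmodule n k = ⊤ := by
  rw [eq_top_iff]
  rintro v -
  obtain ⟨p, rfl⟩ := Ideal.Quotient.mk_surjective v
  induction p using MvPolynomial.induction_on with
  | C a =>
    have h : π (C a) = a • 1 := by simp
    rw [h]
    exact Submodule.smul_mem _ a (genSubring_subset_spanningSubmodule (one_mem _))
  | add p q hp hq => rw [map_add]; exact add_mem hp hq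
  | mul_X p v hp =>
    rw [map_mul]
    rcases v with j | ⟨m, η⟩
    · rw [mul_comm]; exact genSubring_mul_mem hn (mk_X_mem_genSubring j) hp
    · exact mul_W_mem hn hp m η

end QuotientI0

theorem quotient_I0_spanned_general (n : ℕ) (hn : 2 < n) (k : Type*) :
    Submodule.span ℤ
      ((Subring.closure
          {Ideal.Quotient.mk (idealI0 n k) (X (Sum.inl 0)),
           Ideal.Quotient.mk (idealI0 n k) (X (Sum.inl 1)),
           Ideal.Quotient.mk (idealI0 n k) (X (Sum.inl 2)),
           Ideal.Quotient.mk (idealI0 n k) (X (Sum.inl 3))} :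
         Set (MvPolynomial (BigVar k) ℤ ⧸ idealI0 n k)) ∪
       {p | ∃ (i l : ℕ) (m : ℕ+) (η : Option k), i ≤ n - 1 ∧ l ≤ n - 2 ∧
         p = Ideal.Quotient.mk (idealI0 n k)
           (X (Sum.inl 0) ^ i * X (Sum.inl 1) ^ l * W m η)}) = ⊤ :=
  QuotientI0.spanningSubmodule_eq_top (by omega)

/-- (From the proof of Theorem 3.10.) The quotient ring `ℤ[X]/I₀` is generated, as a
`ℤ`-module, by the subring of `ℤ[X]/I₀` generated by `x̄, ȳ, z̄₊, z̄₋` together with the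
elements `x̄^i ȳ^l w̄_{m,η}` for `0 ≤ i ≤ n-1`, `0 ≤ l ≤ n-2`, `m ≥ 1`, `η ∈ k̄`. -/
theorem quotient_I0_spanned (n : ℕ) (hn : 2 < n) (k : Type*) [Field k] [IsAlgClosed k]
    (q : k) (hq : orderOf q = n) :
    Submodule.span ℤ
      ((Subring.closure
          {Ideal.Quotient.mk (idealI0 n k) (X (Sum.inl 0)),
           Ideal.Quotient.mk (idealI0 n k) (X (Sum.inl 1)),
           Ideal.Quotient.mk (idealI0 n k) (X (Sum.inl 2)),
           Ideal.Quotient.mk (idealI0 n k) (X (Sum.inl 3))} :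
         Set (MvPolynomial (BigVar k) ℤ ⧸ idealI0 n k)) ∪
       {p | ∃ (i l : ℕ) (m : ℕ+) (η : Option k), i ≤ n - 1 ∧ l ≤ n - 2 ∧
         p = Ideal.Quotient.mk (idealI0 n k)
           (X (Sum.inl 0) ^ i * X (Sum.inl 1) ^ l * W m η)}) = ⊤ :=
  quotient_I0_spanned_general n hn k
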